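/- arXiv:2106.06932 — 3 statements merged into one kernel-verified Lean document; each statement's English description precedes it below -/
import Mathlib

section
/- Let π be a policy and extend the occupancy formula d(x) := (1−γ)((I − γΠ(x)ᵀPᵀ)⁻¹)Π(x)ᵀμ0 to all x ∈ ℝ^{S×A} in a neighborhood of π on which I − γΠ(x)ᵀPᵀ is invertible. Then x ↦ d(x) is differentiable at π, and its derivative matrix Υ̃ ∈ ℝ^{(S×A) × (S×A)}, with entries Υ̃_{(s̃,ã),(s,a)} = ∂d(x)(s,a)/∂x(s̃,ã) evaluated at x = π, equals Δ(Ξᵀ d_S(π)) Ψ(π)⁻¹. -/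
open Matrix

noncomputable section

attribute [local instance 2000] Matrix.linftyOpNormedAddCommGroup Matrix.linftyOpNormedSpace
attribute [local instance 2000] Matrix.linftyOpNormedRing Matrix.linftyOpNormedAlgebra

variable {S A : Type*} [Fintype S] [Fintype A] [DecidableEq S] [DecidableEq A]
  [Nonempty S] [Nonempty A]

/-- A policy: nonnegative entries, and for each state the action probabilities sum to one. -/
def IsPolicy (x : S × A → ℝ) : Prop :=
  (∀ p, 0 ≤ x p) ∧ ∀ s : S, ∑ a : A, x (s, a) = 1

/-- A row-stochastic transition matrix. -/
def IsStochasticMat (P : Matrix (S × A) S ℝ) : Prop :=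
  (∀ p s, 0 ≤ P p s) ∧ ∀ p, ∑ s : S, P p s = 1

/-- A probability vector on states. -/
def IsProbVec (μ : S → ℝ) : Prop :=
  (∀ s, 0 ≤ μ s) ∧ ∑ s : S, μ s = 1

/-- The block policy matrix `Π(x) ∈ ℝ^{S × (S×A)}`. -/
def piMat (x : S × A → ℝ) : Matrix S (S × A) ℝ :=
  Matrix.of fun s p => if p.1 = s then x p else 0

/-- The action-marginalization matrix `Ξ ∈ ℝ^{S × (S×A)}`. -/
def xiMat : Matrix S (S × A) ℝ :=
  Matrix.of fun s p => if p.1 = s then (1 : ℝ) else 0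

/-- `Ψ(x) = I - γ P Π(x)`. -/
def psiMat (P : Matrix (S × A) S ℝ) (γ : ℝ) (x : S × A → ℝ) :
    Matrix (S × A) (S × A) ℝ :=
  1 - γ • (P * piMat x)

/-- The discounted state-action occupancy `d(x) = (1-γ)(Ψ(x)ᵀ)⁻¹ Π(x)ᵀ μ0`. -/
def dOcc (P : Matrix (S × A) S ℝ) (γ : ℝ) (μ0 : S → ℝ) (x : S × A → ℝ) :
    S × A → ℝ :=
  (1 - γ) • (((psiMat P γ x)ᵀ)⁻¹ *ᵥ ((piMat x)ᵀ *ᵥ μ0))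

-- ### auxiliary lemmas

lemma piMat_add (x y : S × A → ℝ) : piMat (x + y) = piMat x + piMat y := by
  ext s p; simp only [piMat, of_apply, Pi.add_apply, Matrix.add_apply]
  split <;> simp

lemma piMat_smul (c : ℝ) (x : S × A → ℝ) : piMat (c • x) = c • piMat x := by
  ext s p; simp only [piMat, of_apply, Pi.smul_apply, Matrix.smul_apply, smul_eq_mul]
  split <;> simp

lemma piMat_transpose_mulVec_apply (x : S × A → ℝ) (w : S → ℝ) (p : S × A) :
    ((piMat x)ᵀ *ᵥ w) p = x p * w p.1 := by
  simp [piMat, mulVec, dotProduct, transpose_apply, ite_mul]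

lemma xiMat_mulVec_apply (v : S × A → ℝ) (s : S) :
    ((xiMat (S := S) (A := A)) *ᵥ v) s = ∑ a : A, v (s, a) := by
  simp only [xiMat, mulVec, dotProduct, of_apply, Fintype.sum_prod_type, ite_mul, one_mul,
    zero_mul]
  have h : ∀ t : S, (∑ a : A, if t = s then v (t, a) else 0)
      = if t = s then ∑ a : A, v (t, a) else 0 := by
    intro t; split <;> simp
  simp_rw [h, Finset.sum_ite_eq', Finset.mem_univ, if_true]

lemma xiMat_transpose_mulVec_apply (w : S → ℝ) (p : S × A) :
    ((xiMat (S := S) (A := A))ᵀ *ᵥ w) p = w p.1 := by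
  simp [xiMat, mulVec, dotProduct, transpose_apply, ite_mul]

lemma psi_unit (P : Matrix (S × A) S ℝ) (hP : IsStochasticMat P)
    (γ : ℝ) (hγ0 : 0 ≤ γ) (hγ1 : γ < 1) (x : S × A → ℝ) (hx : IsPolicy x) :
    IsUnit (psiMat P γ x) := by
  haveI : CompleteSpace (Matrix (S × A) (S × A) ℝ) := FiniteDimensional.complete ℝ _
  have hrow : ∀ s : S, ∑ q : S × A, piMat x s q = 1 := by
    intro s
    simp only [piMat, of_apply, Fintype.sum_prod_type]
    rw [Finset.sum_eq_single s]
    · simpa using hx.2 s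
    · intro b _ hb; simp [hb]
    · simp
  have hent : ∀ i q, 0 ≤ (P * piMat x) i q := by
    intro i q
    rw [mul_apply]
    refine Finset.sum_nonneg fun s _ => mul_nonneg (hP.1 i s) ?_
    simp only [piMat, of_apply]
    split
    · exact hx.1 q
    · exact le_refl 0
  have hQsum : ∀ i, ∑ q, (P * piMat x) i q = 1 := by
    intro i
    simp_rw [mul_apply]
    rw [Finset.sum_comm]
    simp_rw [← Finset.mul_sum, hrow, mul_one]
    exact hP.2 i
  have hQ : ‖P * piMat x‖₊ ≤ 1 := by
    rw [Matrix.linfty_opNNNorm_def]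
    apply Finset.sup_le
    intro i _
    have : ((∑ j, ‖(P * piMat x) i j‖₊ : NNReal) : ℝ) = 1 := by
      rw [NNReal.coe_sum]
      simp_rw [coe_nnnorm, Real.norm_eq_abs]
      rw [Finset.sum_congr rfl fun j _ => abs_of_nonneg (hent i j)]
      exact hQsum i
    rw [← NNReal.coe_le_coe, this, NNReal.coe_one]
  have hlt : ‖γ • (P * piMat x)‖ < 1 := by
    rw [norm_smul, Real.norm_eq_abs, abs_of_nonneg hγ0]
    have h1 : ‖P * piMat x‖ ≤ 1 := by
      rw [← coe_nnnorm]; exact_mod_cast hQ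
    nlinarith [norm_nonneg (P * piMat x)]
  have := (Units.oneSub (γ • (P * piMat x)) hlt).isUnit
  rwa [Units.val_oneSub] at this

lemma flow (P : Matrix (S × A) S ℝ) (hP : IsStochasticMat P)
    (γ : ℝ) (hγ0 : 0 ≤ γ) (hγ1 : γ < 1) (μ0 : S → ℝ)
    (x : S × A → ℝ) (hx : IsPolicy x) :
    xiMat *ᵥ dOcc P γ μ0 x = γ • (Pᵀ *ᵥ dOcc P γ μ0 x) + (1 - γ) • μ0 := by
  have hu := psi_unit P hP γ hγ0 hγ1 x hx
  have hdetT : IsUnit ((psiMat P γ x)ᵀ).det := by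
    rw [Matrix.det_transpose]; exact (Matrix.isUnit_iff_isUnit_det _).mp hu
  have h1 : (psiMat P γ x)ᵀ *ᵥ dOcc P γ μ0 x = (1 - γ) • ((piMat x)ᵀ *ᵥ μ0) := by
    rw [show dOcc P γ μ0 x = (1 - γ) • (((psiMat P γ x)ᵀ)⁻¹ *ᵥ ((piMat x)ᵀ *ᵥ μ0)) from rfl,
      Matrix.mulVec_smul, Matrix.mulVec_mulVec, Matrix.mul_nonsing_inv _ hdetT,
      Matrix.one_mulVec]
  have h2 : dOcc P γ μ0 x = (piMat x)ᵀ *ᵥ (γ • (Pᵀ *ᵥ dOcc P γ μ0 x) + (1 - γ) • μ0) := by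
    have hT : (psiMat P γ x)ᵀ = 1 - γ • ((piMat x)ᵀ * Pᵀ) := by
      simp [psiMat, Matrix.transpose_sub, Matrix.transpose_smul, Matrix.transpose_mul]
    rw [hT, Matrix.sub_mulVec, Matrix.one_mulVec, Matrix.smul_mulVec] at h1
    rw [Matrix.mulVec_add, Matrix.mulVec_smul, Matrix.mulVec_smul, Matrix.mulVec_mulVec]
    rw [← h1]
    abel
  funext s
  rw [xiMat_mulVec_apply]
  have h3 : ∀ p : S × A,
      dOcc P γ μ0 x p = x p * (γ • (Pᵀ *ᵥ dOcc P γ μ0 x) + (1 - γ) • μ0) p.1 := by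
    intro p
    conv_lhs => rw [h2]
    rw [piMat_transpose_mulVec_apply]
  simp_rw [h3]
  rw [← Finset.sum_mul, hx.2 s, one_mul]

/-- Matrix-vector multiplication, as a continuous bilinear map. -/
def mulVecL : Matrix (S × A) (S × A) ℝ →L[ℝ] ((S × A) → ℝ) →L[ℝ] ((S × A) → ℝ) :=
  LinearMap.toContinuousLinearMap
  { toFun := fun N => LinearMap.toContinuousLinearMap N.mulVecLin
    map_add' := fun N1 N2 => by
      ext v i
      simp [Matrix.add_mulVec]
    map_smul' := fun c N => by
      ext v i
      simp [Matrix.smul_mulVec] }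

@[simp] lemma mulVecL_apply (N : Matrix (S × A) (S × A) ℝ) (v : (S × A) → ℝ) :
    mulVecL N v = N *ᵥ v := rfl

/-- The key algebraic identity for the derivative. -/
lemma key_identity (P : Matrix (S × A) S ℝ) (hP : IsStochasticMat P)
    (γ : ℝ) (hγ0 : 0 ≤ γ) (hγ1 : γ < 1) (μ0 : S → ℝ)
    (x : S × A → ℝ) (hx : IsPolicy x) (v : S × A → ℝ) :
    (1 - γ) • (((psiMat P γ x)ᵀ)⁻¹ *ᵥ ((piMat v)ᵀ *ᵥ μ0)
        + (((psiMat P γ x)ᵀ)⁻¹ * (γ • ((piMat v)ᵀ * Pᵀ)) * ((psiMat P γ x)ᵀ)⁻¹) *ᵥ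
          ((piMat x)ᵀ *ᵥ μ0))
      = v ᵥ* (diagonal (xiMatᵀ *ᵥ (xiMat *ᵥ dOcc P γ μ0 x)) * (psiMat P γ x)⁻¹) := by
  have hflow := flow P hP γ hγ0 hγ1 μ0 x hx
  -- rewrite the right-hand side as `T *ᵥ (v ᵥ* diagonal e)`
  rw [← Matrix.vecMul_vecMul, ← Matrix.mulVec_transpose, Matrix.transpose_nonsing_inv]
  -- rewrite the left-hand side as `T *ᵥ (...)`
  rw [← Matrix.mulVec_mulVec (v := (piMat x)ᵀ *ᵥ μ0), ← Matrix.mulVec_mulVec,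
    ← Matrix.mulVec_add, ← Matrix.mulVec_smul]
  refine congrArg (Matrix.mulVec _) ?_
  funext p
  have hd : dOcc P γ μ0 x = (1 - γ) • (((psiMat P γ x)ᵀ)⁻¹ *ᵥ ((piMat x)ᵀ *ᵥ μ0)) := rfl
  simp only [Pi.smul_apply, Pi.add_apply, smul_eq_mul, Matrix.vecMul_diagonal,
    xiMat_transpose_mulVec_apply, piMat_transpose_mulVec_apply, Matrix.smul_mulVec]
  rw [← Matrix.mulVec_mulVec]
  rw [piMat_transpose_mulVec_apply]
  rw [hflow]
  simp only [Pi.add_apply, Pi.smul_apply, smul_eq_mul, hd, Matrix.mulVec_smul]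
  ring

/-- the occupancy formula `x ↦ (1-γ)(I - γΠ(x)ᵀPᵀ)⁻¹Π(x)ᵀμ0` is differentiable
at a policy `π`, with derivative matrix `Υ̃ = Δ(Ξᵀ d_S(π)) Ψ(π)⁻¹`
(so the derivative in direction `v` is `v ᵥ* Υ̃`). -/
theorem occupancy_hasFDerivAt
    (P : Matrix (S × A) S ℝ) (hP : IsStochasticMat P)
    (γ : ℝ) (hγ0 : 0 ≤ γ) (hγ1 : γ < 1)
    (μ0 : S → ℝ) (hμ0 : IsProbVec μ0)
    (x : S × A → ℝ) (hx : IsPolicy x) :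
    HasFDerivAt
      (fun y : S × A → ℝ =>
        (1 - γ) • (((1 : Matrix (S × A) (S × A) ℝ) - γ • ((piMat y)ᵀ * Pᵀ))⁻¹
          *ᵥ ((piMat y)ᵀ *ᵥ μ0)))
      (LinearMap.toContinuousLinearMap
        (Matrix.vecMulLinear
          (Matrix.diagonal (xiMatᵀ *ᵥ (xiMat *ᵥ dOcc P γ μ0 x)) * (psiMat P γ x)⁻¹)))
      x := by
  haveI : CompleteSpace (Matrix (S × A) (S × A) ℝ) := FiniteDimensional.complete ℝ _
  have hu : IsUnit (psiMat P γ x) := psi_unit P hP γ hγ0 hγ1 x hx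
  have hdetT : IsUnit ((psiMat P γ x)ᵀ).det := by
    rw [Matrix.det_transpose]; exact (Matrix.isUnit_iff_isUnit_det _).mp hu
  have huT : IsUnit ((psiMat P γ x)ᵀ) := (Matrix.isUnit_iff_isUnit_det _).mpr hdetT
  set N : (S × A → ℝ) → Matrix (S × A) (S × A) ℝ :=
    fun y => (1 : Matrix (S × A) (S × A) ℝ) - γ • ((piMat y)ᵀ * Pᵀ) with hN
  have hNx : N x = (psiMat P γ x)ᵀ := by
    simp [hN, psiMat, Matrix.transpose_sub, Matrix.transpose_smul, Matrix.transpose_mul]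
  -- linear part
  set Lmat : (S × A → ℝ) →ₗ[ℝ] Matrix (S × A) (S × A) ℝ :=
    { toFun := fun v => γ • ((piMat v)ᵀ * Pᵀ)
      map_add' := fun a b => by
        simp [piMat_add, Matrix.transpose_add, Matrix.add_mul, smul_add]
      map_smul' := fun c a => by
        simp only [piMat_smul, Matrix.transpose_smul, Matrix.smul_mul, RingHom.id_apply]
        rw [smul_comm] } with hLmat
  set cLin : (S × A → ℝ) →ₗ[ℝ] (S × A → ℝ) :=
    { toFun := fun v => (piMat v)ᵀ *ᵥ μ0
      map_add' := fun a b => by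
        simp [piMat_add, Matrix.transpose_add, Matrix.add_mulVec]
      map_smul' := fun c a => by
        simp [piMat_smul, Matrix.transpose_smul, Matrix.smul_mulVec] } with hcLin
  have hM : HasFDerivAt N (-(Lmat.toContinuousLinearMap)) x := by
    have h1 : HasFDerivAt (fun y => Lmat.toContinuousLinearMap y)
        Lmat.toContinuousLinearMap x := Lmat.toContinuousLinearMap.hasFDerivAt
    have h2 := h1.const_sub (1 : Matrix (S × A) (S × A) ℝ)
    exact h2
  obtain ⟨w, hw⟩ := huT
  have hinv0 : HasFDerivAt (Ring.inverse : Matrix (S × A) (S × A) ℝ → _)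
      (-ContinuousLinearMap.mulLeftRight ℝ (Matrix (S × A) (S × A) ℝ)
          (↑w⁻¹) (↑w⁻¹)) (N x) := by
    rw [hNx, ← hw]
    exact hasFDerivAt_ringInverse w
  have hinv : HasFDerivAt (fun y => Ring.inverse (N y))
      ((-ContinuousLinearMap.mulLeftRight ℝ (Matrix (S × A) (S × A) ℝ)
          (↑w⁻¹) (↑w⁻¹)).comp
        (-(Lmat.toContinuousLinearMap))) x := hinv0.comp x hM
  have hBg := ((mulVecL (S := S) (A := A)).hasFDerivAt).comp x hinv
  have hc : HasFDerivAt (fun y => cLin.toContinuousLinearMap y)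
      cLin.toContinuousLinearMap x := cLin.toContinuousLinearMap.hasFDerivAt
  have hprod := (hBg.clm_apply hc).const_smul (1 - γ)
  have hfun : (fun y => (1 - γ) • (⇑mulVecL ∘ fun y => Ring.inverse (N y)) y
        (cLin.toContinuousLinearMap y))
      = (fun y : S × A → ℝ =>
        (1 - γ) • (((1 : Matrix (S × A) (S × A) ℝ) - γ • ((piMat y)ᵀ * Pᵀ))⁻¹
          *ᵥ ((piMat y)ᵀ *ᵥ μ0))) := by
    funext y
    show (1 - γ) • (mulVecL (Ring.inverse (N y)) (cLin.toContinuousLinearMap y)) = _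
    simp only [mulVecL_apply, Matrix.nonsing_inv_eq_ringInverse, hN]
    rfl
  change HasFDerivAt (fun y => (1 - γ) • (⇑mulVecL ∘ fun y => Ring.inverse (N y)) y
      (cLin.toContinuousLinearMap y)) _ x at hprod
  rw [hfun] at hprod
  convert hprod using 1
  · rfl
  · rfl
  -- equality of the derivatives
  refine ContinuousLinearMap.ext fun (v : S × A → ℝ) => ?_
  have hui : (↑w⁻¹ : Matrix (S × A) (S × A) ℝ) = ((psiMat P γ x)ᵀ)⁻¹ := by
    rw [Matrix.coe_units_inv, hw]
  simp only [ContinuousLinearMap.smul_apply, ContinuousLinearMap.add_apply,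
    ContinuousLinearMap.comp_apply, ContinuousLinearMap.flip_apply,
    ContinuousLinearMap.neg_apply, ContinuousLinearMap.coe_comp', Function.comp_apply,
    ContinuousLinearMap.mulLeftRight_apply, LinearMap.coe_toContinuousLinearMap',
    Matrix.vecMulLinear_apply, mulVecL_apply, hui]
  rw [hNx, ← Matrix.nonsing_inv_eq_ringInverse]
  change v ᵥ* _ = (1 - γ) • (((psiMat P γ x)ᵀ⁻¹) *ᵥ cLin v
    + (-(((psiMat P γ x)ᵀ⁻¹) * -(Lmat v) * ((psiMat P γ x)ᵀ⁻¹))) *ᵥ cLin x)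
  rw [show -(((psiMat P γ x)ᵀ⁻¹) * -(Lmat v) * ((psiMat P γ x)ᵀ⁻¹))
      = ((psiMat P γ x)ᵀ⁻¹) * (Lmat v) * ((psiMat P γ x)ᵀ⁻¹) by
    simp [Matrix.neg_mul, Matrix.mul_neg, neg_neg]]
  exact (key_identity P hP γ hγ0 hγ1 μ0 x hx v).symm
end
end

section
/- (Stationary distribution derivative.) The map θ ↦ d_θ is differentiable, and its Jacobian Υ ∈ ℝ^{n × (S×A)}, with entries Υ_{i,(s,a)} = ∂d_θ(s,a)/∂θ_i, is given by Υ = H_θ Δ(Ξᵀ d_{S,θ}) Ψ_θ⁻¹. -/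
/-
The occupancy solves the flow equation `Ψ(x)ᵀ d = (1 - γ) Π(x)ᵀ μ0`, and `Ψ(x)` is invertible
because `‖γ P Π(x)‖∞ ≤ γ < 1`. As `Ψ` and `Π` are affine in `x`, differentiating
`d = (Ψᵀ)⁻¹ ((1 - γ) Πᵀ μ0)` in a direction `y` gives `(Ψᵀ)⁻¹ Π(y)ᵀ ((1 - γ) μ0 + γ Pᵀ d)`.
The flow equation reads `d = Π(x)ᵀ ((1 - γ) μ0 + γ Pᵀ d)` and `Ξ Π(x)ᵀ = I`, so the vector in
brackets is `Ξ d = d_S`. Finally `Π(y)ᵀ d_S = Δ(Ξᵀ d_S) y`, and transposing gives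
`Υ = H Δ(Ξᵀ d_S) Ψ⁻¹`.
-/

open Matrix

noncomputable section

variable {S A : Type*} [Fintype S] [Fintype A] [DecidableEq S] [DecidableEq A]
  [Nonempty S] [Nonempty A]

attribute [local instance] Matrix.linftyOpNormedAddCommGroup Matrix.linftyOpNormedSpace
  Matrix.linftyOpNormedRing Matrix.linftyOpNormedAlgebra

namespace Matrix

variable {m n : Type*} [Fintype m] [Fintype n]

theorem linfty_opNorm_le_one_of_rowStochastic {B : Matrix m n ℝ} (h0 : ∀ i j, 0 ≤ B i j)
    (h1 : ∀ i, ∑ j, B i j = 1) : ‖B‖ ≤ 1 := by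
  rw [linfty_opNorm_def, ← NNReal.coe_one, NNReal.coe_le_coe]
  refine Finset.sup_le fun i _ => le_of_eq ?_
  rw [← NNReal.coe_inj, NNReal.coe_sum, NNReal.coe_one, ← h1 i]
  exact Finset.sum_congr rfl fun j _ => by rw [coe_nnnorm, Real.norm_of_nonneg (h0 i j)]

theorem isUnit_one_sub_smul_mul [DecidableEq m] {B : Matrix m n ℝ} {C : Matrix n m ℝ}
    (hB : ‖B‖ ≤ 1) (hC : ‖C‖ ≤ 1) {γ : ℝ} (hγ0 : 0 ≤ γ) (hγ1 : γ < 1) :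
    IsUnit (1 - γ • (B * C)) := by
  have hBC : ‖B * C‖ ≤ 1 :=
    (linfty_opNorm_mul B C).trans (mul_le_one₀ hB (norm_nonneg C) hC)
  have hsmall : ‖γ • (B * C)‖ < 1 := by
    rw [norm_smul, Real.norm_of_nonneg hγ0]
    nlinarith [norm_nonneg (B * C)]
  exact ⟨Units.oneSub _ hsmall, rfl⟩

variable (m n) in
def mulVecCLM : Matrix m n ℝ →L[ℝ] (n → ℝ) →L[ℝ] m → ℝ :=
  LinearMap.toContinuousLinearMap
    (LinearMap.toContinuousLinearMap.toLinearMap ∘ₗ mulVecBilin ℝ ℝ)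

@[simp]
theorem mulVecCLM_apply (M : Matrix m n ℝ) (v : n → ℝ) : mulVecCLM m n M v = M *ᵥ v := rfl

end Matrix

theorem HasFDerivAt.matrix_inv_mulVec {E : Type*} [NormedAddCommGroup E] [NormedSpace ℝ E]
    {m : Type*} [Fintype m] [DecidableEq m] {M : E → Matrix m m ℝ} {u : E → m → ℝ}
    {M' : E →L[ℝ] Matrix m m ℝ} {u' L : E →L[ℝ] m → ℝ} {x : E}
    (hM : HasFDerivAt M M' x) (hu : HasFDerivAt u u' x) (hx : IsUnit (M x))
    (hL : ∀ v, L v = (M x)⁻¹ *ᵥ (u' v - M' v *ᵥ ((M x)⁻¹ *ᵥ u x))) :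
    HasFDerivAt (fun t => (M t)⁻¹ *ᵥ u t) L x := by
  have hinv := hasFDerivAt_ringInverse (𝕜 := ℝ) hx.unit
  rw [hx.unit_spec] at hinv
  have hprod := (mulVecCLM m m).hasFDerivAt_of_bilinear (hinv.comp x hM) hu
  have hfun :
      (fun t => (M t)⁻¹ *ᵥ u t) = fun t => mulVecCLM m m ((Ring.inverse ∘ M) t) (u t) := by
    funext t
    simp [nonsing_inv_eq_ringInverse]
  rw [hfun]
  refine hprod.congr_fderiv (ContinuousLinearMap.ext fun v => ?_)
  -- `precompR_apply` does not fire: the matrix topology induced by the norm is not syntactically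
  -- `instTopologicalSpaceMatrix`.
  change Ring.inverse (M x) *ᵥ u' v + (-(((hx.unit⁻¹ : (Matrix m m ℝ)ˣ) : Matrix m m ℝ) * M' v *
    ((hx.unit⁻¹ : (Matrix m m ℝ)ˣ) : Matrix m m ℝ))) *ᵥ u x = L v
  rw [hL, coe_units_inv, hx.unit_spec, ← nonsing_inv_eq_ringInverse, neg_mulVec, ← mulVec_mulVec,
    ← mulVec_mulVec, mulVec_sub, sub_eq_add_neg]

section policy

omit [Nonempty S] [Nonempty A]

-- Without the ascription on `xiMat`, `*` elaborates to the `CStarMatrix` multiplication.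
theorem piMat_eq_xiMat_mul_diagonal (x : S × A → ℝ) :
    piMat x = (xiMat : Matrix S (S × A) ℝ) * diagonal x := by
  ext s p
  simp [mul_diagonal, piMat, xiMat]

theorem piMat_transpose_mulVec (x : S × A → ℝ) (v : S → ℝ) :
    (piMat x)ᵀ *ᵥ v = diagonal (xiMatᵀ *ᵥ v) *ᵥ x := by
  ext p
  rw [piMat_eq_xiMat_mul_diagonal, transpose_mul, diagonal_transpose, ← mulVec_mulVec,
    mulVec_diagonal, mulVec_diagonal, mul_comm]

omit [DecidableEq A] in
theorem piMat_row_sum (x : S × A → ℝ) (s : S) : ∑ p, piMat x s p = ∑ a, x (s, a) := by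
  rw [Fintype.sum_prod_type]
  simp only [piMat, of_apply]
  rw [Finset.sum_eq_single s (fun s' _ hs' => by simp [hs']) (by simp)]
  simp

omit [DecidableEq A] in
theorem piMat_mul_xiMat_transpose {x : S × A → ℝ} (hx : ∀ s, ∑ a, x (s, a) = 1) :
    piMat x * (xiMat : Matrix S (S × A) ℝ)ᵀ = 1 := by
  ext s s'
  rw [mul_apply, Fintype.sum_prod_type]
  simp only [piMat, xiMat, transpose_apply, of_apply, one_apply]
  rw [Finset.sum_eq_single s (fun _ _ h => by simp [h]) (by simp)]
  simp [hx s]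

theorem isUnit_psiMat {P : Matrix (S × A) S ℝ} (hP : IsStochasticMat P) {γ : ℝ} (hγ0 : 0 ≤ γ)
    (hγ1 : γ < 1) {x : S × A → ℝ} (hx : IsPolicy x) : IsUnit (psiMat P γ x) :=
  isUnit_one_sub_smul_mul (linfty_opNorm_le_one_of_rowStochastic hP.1 hP.2)
    (linfty_opNorm_le_one_of_rowStochastic
      (fun s p => by simp only [piMat, of_apply]; split_ifs <;> simp [hx.1 p])
      (fun s => (piMat_row_sum x s).trans (hx.2 s))) hγ0 hγ1

variable {P : Matrix (S × A) S ℝ} {γ : ℝ} {μ0 : S → ℝ} {x : S × A → ℝ}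

theorem psiMat_transpose_mulVec_dOcc (hΨ : IsUnit (psiMat P γ x)) :
    (psiMat P γ x)ᵀ *ᵥ dOcc P γ μ0 x = (1 - γ) • ((piMat x)ᵀ *ᵥ μ0) := by
  rw [dOcc, mulVec_smul, mulVec_mulVec,
    mul_nonsing_inv _ ((isUnit_iff_isUnit_det _).1 ((isUnit_transpose _).2 hΨ)), one_mulVec]

theorem xiMat_mulVec_dOcc (hx : ∀ s, ∑ a, x (s, a) = 1) (hΨ : IsUnit (psiMat P γ x)) :
    xiMat *ᵥ dOcc P γ μ0 x = (1 - γ) • μ0 + γ • (Pᵀ *ᵥ dOcc P γ μ0 x) := by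
  set d := dOcc P γ μ0 x
  set w := (1 - γ) • μ0 + γ • (Pᵀ *ᵥ d)
  have hd : d = (piMat x)ᵀ *ᵥ w := by
    have h := psiMat_transpose_mulVec_dOcc (μ0 := μ0) hΨ
    rw [psiMat, transpose_sub, transpose_one, sub_mulVec, one_mulVec, transpose_smul, smul_mulVec,
      transpose_mul, ← mulVec_mulVec, sub_eq_iff_eq_add] at h
    rw [mulVec_add, mulVec_smul, mulVec_smul, ← h]
  calc xiMat *ᵥ d = xiMat *ᵥ ((piMat x)ᵀ *ᵥ w) := congrArg _ hd
    _ = (piMat x * (xiMat : Matrix S (S × A) ℝ)ᵀ)ᵀ *ᵥ w := by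
      rw [transpose_mul, transpose_transpose, mulVec_mulVec]
    _ = w := by rw [piMat_mul_xiMat_transpose hx, transpose_one, one_mulVec]

theorem hasFDerivAt_dOcc (hx : ∀ s, ∑ a, x (s, a) = 1) (hΨ : IsUnit (psiMat P γ x)) :
    HasFDerivAt (dOcc P γ μ0) (LinearMap.toContinuousLinearMap (mulVecLin
      (((psiMat P γ x)ᵀ)⁻¹ * diagonal (xiMatᵀ *ᵥ (xiMat *ᵥ dOcc P γ μ0 x))))) x := by
  set T : (S × A → ℝ) →L[ℝ] Matrix (S × A) (S × A) ℝ := LinearMap.toContinuousLinearMap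
    ((transposeLinearEquiv _ _ ℝ ℝ).toLinearMap ∘ₗ
      mulLeftLinearMap _ ℝ (P * (xiMat : Matrix S (S × A) ℝ)) ∘ₗ diagonalLinearMap _ ℝ ℝ)
  set U : (S × A → ℝ) →L[ℝ] (S × A → ℝ) :=
    LinearMap.toContinuousLinearMap (mulVecLin (diagonal (xiMatᵀ *ᵥ μ0)))
  have hT (y : S × A → ℝ) : T y = (P * piMat y)ᵀ := by
    simp [T, piMat_eq_xiMat_mul_diagonal, transpose_mul]
  have hU (y : S × A → ℝ) : U y = (piMat y)ᵀ *ᵥ μ0 := by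
    simp [U, piMat_transpose_mulVec]
  have hM : HasFDerivAt (fun t => (psiMat P γ t)ᵀ) (-(γ • T)) x := by
    have : (fun t => (psiMat P γ t)ᵀ) = fun t => 1 - γ • T t := by
      funext t
      simp [psiMat, hT]
    rw [this]
    exact (T.hasFDerivAt.const_smul γ).const_sub 1
  have hu : HasFDerivAt (fun t => (1 - γ) • ((piMat t)ᵀ *ᵥ μ0)) ((1 - γ) • U) x := by
    simp only [← hU]
    exact U.hasFDerivAt.const_smul (1 - γ)
  have hdOcc (t : S × A → ℝ) :
      dOcc P γ μ0 t = ((psiMat P γ t)ᵀ)⁻¹ *ᵥ ((1 - γ) • ((piMat t)ᵀ *ᵥ μ0)) := by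
    rw [dOcc, mulVec_smul]
  refine (hM.matrix_inv_mulVec hu ((isUnit_transpose _).2 hΨ) fun y => ?_).congr_of_eventuallyEq
    (.of_forall hdOcc)
  rw [← hdOcc x]
  simp only [LinearMap.coe_toContinuousLinearMap', mulVecLin_apply, ← mulVec_mulVec,
    _root_.smul_apply, _root_.neg_apply, hU, hT, neg_mulVec, sub_neg_eq_add]
  congr 1
  rw [← piMat_transpose_mulVec, xiMat_mulVec_dOcc hx hΨ, mulVec_add, mulVec_smul, mulVec_smul,
    smul_mulVec, transpose_mul, ← mulVec_mulVec]

end policy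

theorem stationary_distribution_derivative_general
    (P : Matrix (S × A) S ℝ) (hP : IsStochasticMat P)
    (γ : ℝ) (hγ0 : 0 ≤ γ) (hγ1 : γ < 1)
    (μ0 : S → ℝ)
    {n : ℕ} (π : (Fin n → ℝ) → S × A → ℝ)
    (hpol : ∀ θ, IsPolicy (π θ)) (hdiff : Differentiable ℝ π) :
    Differentiable ℝ (fun θ => dOcc P γ μ0 (π θ)) ∧
    ∀ (θ : Fin n → ℝ) (i : Fin n) (p : S × A),
      fderiv ℝ (fun t => dOcc P γ μ0 (π t)) θ (Pi.single i 1) p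
        = (((Matrix.of fun j p' => fderiv ℝ π θ (Pi.single j 1) p')
            * (Matrix.diagonal (xiMatᵀ *ᵥ (xiMat *ᵥ dOcc P γ μ0 (π θ))) : Matrix (S × A) (S × A) ℝ)
            * (psiMat P γ (π θ))⁻¹ : Matrix (Fin n) (S × A) ℝ)) i p := by
  have hd (θ : Fin n → ℝ) := (hasFDerivAt_dOcc (μ0 := μ0) (hpol θ).2
    (isUnit_psiMat hP hγ0 hγ1 (hpol θ))).comp θ (hdiff θ).hasFDerivAt
  refine ⟨fun θ => (hd θ).differentiableAt, fun θ i p => ?_⟩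
  have h := (hd θ).fderiv
  simp only [Function.comp_def] at h
  simp only [h, ContinuousLinearMap.comp_apply, LinearMap.coe_toContinuousLinearMap',
    mulVecLin_apply]
  set w := xiMatᵀ *ᵥ (xiMat *ᵥ dOcc P γ μ0 (π θ))
  have hΥ : ((psiMat P γ (π θ))ᵀ)⁻¹ * diagonal w = (diagonal w * (psiMat P γ (π θ))⁻¹)ᵀ := by
    rw [transpose_mul, diagonal_transpose, transpose_nonsing_inv]
  rw [hΥ, mulVec_transpose, Matrix.mul_assoc]
  rfl

/-- stationary distribution derivative: `θ ↦ d_θ` is differentiable and its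
Jacobian is `Υ = H_θ Δ(Ξᵀ d_{S,θ}) Ψ_θ⁻¹`, where `H_θ` is the Jacobian of `θ ↦ π_θ`. -/
theorem stationary_distribution_derivative
    (P : Matrix (S × A) S ℝ) (hP : IsStochasticMat P)
    (γ : ℝ) (hγ0 : 0 ≤ γ) (hγ1 : γ < 1)
    (μ0 : S → ℝ) (hμ0 : IsProbVec μ0)
    {n : ℕ} (π : (Fin n → ℝ) → S × A → ℝ)
    (hpol : ∀ θ, IsPolicy (π θ)) (hdiff : Differentiable ℝ π) :
    Differentiable ℝ (fun θ => dOcc P γ μ0 (π θ)) ∧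
    ∀ (θ : Fin n → ℝ) (i : Fin n) (p : S × A),
      fderiv ℝ (fun t => dOcc P γ μ0 (π t)) θ (Pi.single i 1) p
        = (((Matrix.of fun j p' => fderiv ℝ π θ (Pi.single j 1) p')
            * (Matrix.diagonal (xiMatᵀ *ᵥ (xiMat *ᵥ dOcc P γ μ0 (π θ))) : Matrix (S × A) (S × A) ℝ)
            * (psiMat P γ (π θ))⁻¹ : Matrix (Fin n) (S × A) ℝ)) i p :=
  stationary_distribution_derivative_general P hP γ hγ0 hγ1 μ0 π hpol hdiff
end
end

section
/- (Policy gradient theorem in matrix form.) The policy objective J(θ) := d_θᵀ r is differentiable, and its gradient is ∇_θ J(θ) = H_θ Δ(Ξᵀ d_{S,θ}) q_θ, where q_θ := Ψ_θ⁻¹ r; componentwise, ∂J/∂θ_i = Σ_s d_{S,θ}(s) Σ_a q_θ(s,a) · ∂π_θ(s,a)/∂θ_i. -/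
open Matrix

noncomputable section

variable {S A : Type*} [Fintype S] [Fintype A] [DecidableEq S] [DecidableEq A]
  [Nonempty S] [Nonempty A]

set_option linter.unusedSectionVars false
set_option linter.unusedVariables false

section DetDiff
variable {E : Type*} [NormedAddCommGroup E] [NormedSpace ℝ E]
variable {m : Type*} [Fintype m] [DecidableEq m]

theorem diffAt_det {f : E → Matrix m m ℝ} {x : E}
    (h : ∀ i j, DifferentiableAt ℝ (fun e => f e i j) x) :
    DifferentiableAt ℝ (fun e => (f e).det) x := by
  simp only [Matrix.det_apply']
  refine DifferentiableAt.fun_sum fun σ _ => DifferentiableAt.const_mul ?_ _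
  exact (HasFDerivAt.finset_prod fun i _ => (h (σ i) i).hasFDerivAt).differentiableAt

theorem diffAt_adjugate {f : E → Matrix m m ℝ} {x : E}
    (h : ∀ i j, DifferentiableAt ℝ (fun e => f e i j) x) (i j : m) :
    DifferentiableAt ℝ (fun e => (f e).adjugate i j) x := by
  simp only [Matrix.adjugate_apply]
  refine diffAt_det fun a b => ?_
  simp only [Matrix.updateRow_apply]
  by_cases hab : a = j
  · simp [hab]
  · simpa [hab] using h a b

theorem diffAt_inv_apply {f : E → Matrix m m ℝ} {x : E}
    (h : ∀ i j, DifferentiableAt ℝ (fun e => f e i j) x)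
    (hdet : IsUnit (f x).det) (i j : m) :
    DifferentiableAt ℝ (fun e => (f e)⁻¹ i j) x := by
  have hrw : (fun e => (f e)⁻¹ i j)
      = fun e => Ring.inverse (f e).det * (f e).adjugate i j := by
    funext e; rw [Matrix.inv_def]; simp [Matrix.smul_apply, smul_eq_mul]
  rw [hrw]
  exact ((differentiableAt_inverse hdet).comp x (diffAt_det h)).mul (diffAt_adjugate h i j)

end DetDiff


theorem psiMat_apply (P : Matrix (S × A) S ℝ) (γ : ℝ) (x : S × A → ℝ) (p p' : S × A) :
    psiMat P γ x p p' = (if p = p' then (1:ℝ) else 0) - γ * (P p p'.1 * x p') := by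
  simp only [psiMat, Matrix.sub_apply, Matrix.smul_apply, Matrix.one_apply, Matrix.mul_apply,
    piMat, Matrix.of_apply, mul_ite, mul_zero, smul_eq_mul]
  rw [Finset.sum_ite_eq Finset.univ p'.1 (fun s => P p s * x p')]
  simp [mul_assoc]

theorem piMat_mulVec (x : S × A → ℝ) (w : S × A → ℝ) (s : S) :
    (piMat x *ᵥ w) s = ∑ a : A, x (s, a) * w (s, a) := by
  simp only [Matrix.mulVec, dotProduct, piMat, Matrix.of_apply, ite_mul, zero_mul,
    Fintype.sum_prod_type]
  rw [Finset.sum_eq_single_of_mem s (Finset.mem_univ s)]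
  · simp
  · intro b _ hb; simp [hb]

theorem vecMul_piMat (v : S → ℝ) (x : S × A → ℝ) (p : S × A) :
    (v ᵥ* piMat x) p = v p.1 * x p := by
  simp only [Matrix.vecMul, dotProduct, piMat, Matrix.of_apply, mul_ite, mul_zero]
  rw [Finset.sum_ite_eq Finset.univ p.1 (fun s => v s * x p)]
  simp

theorem xiMat_mulVec (d : S × A → ℝ) (s : S) :
    ((xiMat : Matrix S (S × A) ℝ) *ᵥ d) s = ∑ a : A, d (s, a) := by
  simp only [Matrix.mulVec, dotProduct, xiMat, Matrix.of_apply, ite_mul, zero_mul,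
    one_mul, Fintype.sum_prod_type]
  rw [Finset.sum_eq_single_of_mem s (Finset.mem_univ s)]
  · simp
  · intro b _ hb; simp [hb]

theorem xiMatT_mulVec (w : S → ℝ) (p : S × A) :
    ((xiMat : Matrix S (S × A) ℝ)ᵀ *ᵥ w) p = w p.1 := by
  simp only [Matrix.mulVec, dotProduct, Matrix.transpose_apply, xiMat, Matrix.of_apply,
    ite_mul, zero_mul, one_mul]
  rw [Finset.sum_ite_eq Finset.univ p.1 (fun s => w s)]
  simp

theorem psi_isUnit_det {P : Matrix (S × A) S ℝ} {γ : ℝ} {x : S × A → ℝ}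
    (hP : IsStochasticMat P) (hγ0 : 0 ≤ γ) (hγ1 : γ < 1) (hx : IsPolicy x) :
    IsUnit (psiMat P γ x).det := by
  rw [← Matrix.isUnit_iff_isUnit_det, ← Matrix.mulVec_injective_iff_isUnit]
  have key : ∀ v : S × A → ℝ, psiMat P γ x *ᵥ v = 0 → v = 0 := by
    intro v hv
    have hvp : ∀ p, v p = γ * ∑ p', P p p'.1 * x p' * v p' := by
      intro p
      have h0 := congrFun hv p
      simp only [Matrix.mulVec, dotProduct, Pi.zero_apply] at h0
      have : ∑ p', psiMat P γ x p p' * v p'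
          = v p - γ * ∑ p', P p p'.1 * x p' * v p' := by
        simp only [psiMat_apply, sub_mul, ite_mul, one_mul, zero_mul,
          Finset.sum_sub_distrib]
        rw [Finset.sum_ite_eq Finset.univ p (fun p' => v p')]
        simp [Finset.mul_sum, mul_assoc]
      rw [this] at h0
      linarith
    set C := Finset.univ.sup' Finset.univ_nonempty (fun p : S × A => |v p|) with hCdef
    obtain ⟨p0, -, hp0⟩ := Finset.exists_mem_eq_sup' Finset.univ_nonempty
      (fun p : S × A => |v p|)
    have hCle : ∀ p, |v p| ≤ C := fun p =>
      Finset.le_sup' (fun q : S × A => |v q|) (Finset.mem_univ p)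
    have hC0 : 0 ≤ C := le_trans (abs_nonneg _) (hCle p0)
    have hrow : ∑ p' : S × A, P p0 p'.1 * x p' = 1 := by
      rw [Fintype.sum_prod_type]
      calc ∑ s : S, ∑ a : A, P p0 s * x (s, a)
          = ∑ s : S, P p0 s * ∑ a : A, x (s, a) := by
            simp [Finset.mul_sum]
        _ = ∑ s : S, P p0 s := by
            refine Finset.sum_congr rfl fun s _ => by rw [hx.2 s, mul_one]
        _ = 1 := hP.2 p0
    have hγC : C ≤ γ * C := by
      have h1 : |v p0| ≤ γ * ∑ p' : S × A, P p0 p'.1 * x p' * |v p'| := by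
        rw [hvp p0, abs_mul, abs_of_nonneg hγ0]
        refine mul_le_mul_of_nonneg_left ?_ hγ0
        refine le_trans (Finset.abs_sum_le_sum_abs _ _) ?_
        refine Finset.sum_le_sum fun p' _ => ?_
        rw [abs_mul, abs_of_nonneg (mul_nonneg (hP.1 _ _) (hx.1 _))]
      have h2 : ∑ p' : S × A, P p0 p'.1 * x p' * |v p'|
          ≤ ∑ p' : S × A, P p0 p'.1 * x p' * C := by
        refine Finset.sum_le_sum fun p' _ => ?_
        exact mul_le_mul_of_nonneg_left (hCle p') (mul_nonneg (hP.1 _ _) (hx.1 _))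
      have h3 : ∑ p' : S × A, P p0 p'.1 * x p' * C = C := by
        rw [← Finset.sum_mul, hrow, one_mul]
      calc C = |v p0| := hp0
        _ ≤ γ * ∑ p' : S × A, P p0 p'.1 * x p' * |v p'| := h1
        _ ≤ γ * ∑ p' : S × A, P p0 p'.1 * x p' * C :=
            mul_le_mul_of_nonneg_left h2 hγ0
        _ = γ * C := by rw [h3]
    have hC : C = 0 := by nlinarith
    funext p
    have := hCle p
    rw [hC] at this
    simpa using abs_nonpos_iff.mp this
  intro y z hyz
  have h1 : psiMat P γ x *ᵥ (y - z) = 0 := by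
    rw [Matrix.mulVec_sub, hyz, sub_self]
  have := key _ h1
  exact sub_eq_zero.mp this

theorem dOcc_dot (P : Matrix (S × A) S ℝ) (γ : ℝ) (μ0 : S → ℝ) (r : S × A → ℝ)
    (x : S × A → ℝ) :
    dOcc P γ μ0 x ⬝ᵥ r
      = (1 - γ) * (μ0 ⬝ᵥ (piMat x *ᵥ ((psiMat P γ x)⁻¹ *ᵥ r))) := by
  unfold dOcc
  rw [smul_dotProduct]
  rw [← Matrix.transpose_nonsing_inv, Matrix.mulVec_transpose, Matrix.mulVec_transpose,
    ← Matrix.dotProduct_mulVec, ← Matrix.dotProduct_mulVec]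
  simp [smul_eq_mul]

/-- policy gradient theorem in matrix form: `J(θ) = d_θᵀ r` is differentiable
with gradient `H_θ Δ(Ξᵀ d_{S,θ}) q_θ` where `q_θ = Ψ_θ⁻¹ r`; componentwise,
`∂J/∂θ_i = Σ_s d_{S,θ}(s) Σ_a q_θ(s,a) ∂π_θ(s,a)/∂θ_i`. -/
theorem policy_gradient_matrix_form
    (P : Matrix (S × A) S ℝ) (hP : IsStochasticMat P)
    (γ : ℝ) (hγ0 : 0 ≤ γ) (hγ1 : γ < 1)
    (r : S × A → ℝ) (μ0 : S → ℝ) (hμ0 : IsProbVec μ0)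
    {n : ℕ} (π : (Fin n → ℝ) → S × A → ℝ)
    (hpol : ∀ θ, IsPolicy (π θ)) (hdiff : Differentiable ℝ π) :
    Differentiable ℝ (fun θ => dOcc P γ μ0 (π θ) ⬝ᵥ r) ∧
    ∀ (θ : Fin n → ℝ) (i : Fin n),
      fderiv ℝ (fun t => dOcc P γ μ0 (π t) ⬝ᵥ r) θ (Pi.single i 1)
        = (((Matrix.of fun j p' => fderiv ℝ π θ (Pi.single j 1) p')
            * Matrix.diagonal (xiMatᵀ *ᵥ (xiMat *ᵥ dOcc P γ μ0 (π θ))))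
            *ᵥ ((psiMat P γ (π θ))⁻¹ *ᵥ r)) i ∧
      fderiv ℝ (fun t => dOcc P γ μ0 (π t) ⬝ᵥ r) θ (Pi.single i 1)
        = ∑ s : S, (xiMat *ᵥ dOcc P γ μ0 (π θ)) s *
            ∑ a : A, ((psiMat P γ (π θ))⁻¹ *ᵥ r) (s, a) *
              fderiv ℝ π θ (Pi.single i 1) (s, a) := by
  have hdet : ∀ t, IsUnit (psiMat P γ (π t)).det :=
    fun t => psi_isUnit_det hP hγ0 hγ1 (hpol t)
  set qf : (Fin n → ℝ) → S × A → ℝ := fun t => (psiMat P γ (π t))⁻¹ *ᵥ r with hqf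
  have hπd : ∀ p : S × A, Differentiable ℝ (fun t => π t p) := fun p =>
    (ContinuousLinearMap.proj p : ((S × A) → ℝ) →L[ℝ] ℝ).differentiable.comp hdiff
  have hψd : ∀ (t : Fin n → ℝ) (p p' : S × A),
      DifferentiableAt ℝ (fun t' => psiMat P γ (π t') p p') t := by
    intro t p p'
    have hrw : (fun t' => psiMat P γ (π t') p p')
        = fun t' => (if p = p' then (1:ℝ) else 0) - γ * (P p p'.1 * π t' p') := by
      funext t'; rw [psiMat_apply]
    rw [hrw]
    exact (differentiableAt_const _).sub (((hπd p' t).const_mul _).const_mul γ)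
  have hqd : ∀ (p : S × A) (t : Fin n → ℝ), DifferentiableAt ℝ (fun t' => qf t' p) t := by
    intro p t
    have hrw : (fun t' => qf t' p) = fun t' => ∑ p', (psiMat P γ (π t'))⁻¹ p p' * r p' := rfl
    rw [hrw]
    exact DifferentiableAt.fun_sum fun p' _ =>
      (diffAt_inv_apply (fun a b => hψd t a b) (hdet t) p p').mul_const (r p')
  have hJexpr : (fun t => dOcc P γ μ0 (π t) ⬝ᵥ r)
      = fun t => (1 - γ) * ∑ s : S, μ0 s * ∑ a : A, π t (s, a) * qf t (s, a) := by
    funext t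
    rw [dOcc_dot]
    congr 1
    refine Finset.sum_congr rfl fun s _ => ?_
    rw [piMat_mulVec]
  have hJdiffAt : ∀ t, DifferentiableAt ℝ (fun t' => dOcc P γ μ0 (π t') ⬝ᵥ r) t := by
    intro t
    rw [hJexpr]
    exact (DifferentiableAt.fun_sum fun s _ => (DifferentiableAt.fun_sum fun a _ =>
      ((hπd (s, a) t).mul (hqd (s, a) t))).const_mul (μ0 s)).const_mul (1 - γ)
  refine ⟨fun t => hJdiffAt t, ?_⟩
  intro θ i
  -- derivative CLMs
  have hu : ∀ p : S × A, HasFDerivAt (fun t => π t p)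
      ((ContinuousLinearMap.proj p).comp (fderiv ℝ π θ)) θ :=
    fun p => by
      simpa [Function.comp_def] using
        (ContinuousLinearMap.proj p (R := ℝ) (φ := fun _ : S × A => ℝ)).hasFDerivAt.comp θ
          (hdiff θ).hasFDerivAt
  have hψ' : ∀ p p' : S × A, HasFDerivAt (fun t => psiMat P γ (π t) p p')
      (-((γ * P p p'.1) • ((ContinuousLinearMap.proj p').comp (fderiv ℝ π θ)))) θ := by
    intro p p'
    have hrw : (fun t => psiMat P γ (π t) p p')
        = fun t => (if p = p' then (1:ℝ) else 0) - (γ * P p p'.1) * π t p' := by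
      funext t; rw [psiMat_apply]; ring
    rw [hrw]
    exact ((hu p').const_mul (γ * P p p'.1)).const_sub _
  -- implicit function identity
  have hconst : ∀ p : S × A,
      (fun t => ∑ p' : S × A, psiMat P γ (π t) p p' * qf t p') = fun _ => r p := by
    intro p; funext t
    have h1 : psiMat P γ (π t) *ᵥ qf t = r := by
      show psiMat P γ (π t) *ᵥ ((psiMat P γ (π t))⁻¹ *ᵥ r) = r
      rw [Matrix.mulVec_mulVec, Matrix.mul_nonsing_inv _ (hdet t), Matrix.one_mulVec]
    simpa [Matrix.mulVec, dotProduct] using congrFun h1 p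
  have hzero : ∀ p : S × A,
      (∑ p' : S × A, (psiMat P γ (π θ) p p' • (fderiv ℝ (fun t => qf t p') θ)
        + qf θ p' • (-((γ * P p p'.1) •
            ((ContinuousLinearMap.proj p').comp (fderiv ℝ π θ))))))
      = (0 : (Fin n → ℝ) →L[ℝ] ℝ) := by
    intro p
    have hmul : HasFDerivAt (fun t => ∑ p' : S × A, psiMat P γ (π t) p p' * qf t p')
        (∑ p' : S × A, (psiMat P γ (π θ) p p' • (fderiv ℝ (fun t => qf t p') θ)
          + qf θ p' • (-((γ * P p p'.1) •
              ((ContinuousLinearMap.proj p').comp (fderiv ℝ π θ)))))) θ :=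
      HasFDerivAt.fun_sum fun p' _ => ((hψ' p p').mul ((hqd p' θ).hasFDerivAt))
    rw [hconst p] at hmul
    exact hmul.unique (hasFDerivAt_const _ _)
  have hkey : ∀ p : S × A,
      ∑ p' : S × A, psiMat P γ (π θ) p p'
          * fderiv ℝ (fun t => qf t p') θ (Pi.single i 1)
        = γ * ∑ p' : S × A, P p p'.1 * fderiv ℝ π θ (Pi.single i 1) p' * qf θ p' := by
    intro p
    have h0 := congrArg (fun L : (Fin n → ℝ) →L[ℝ] ℝ => L (Pi.single i 1)) (hzero p)
    simp only [ContinuousLinearMap.sum_apply, ContinuousLinearMap.add_apply,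
      ContinuousLinearMap.coe_smul', Pi.smul_apply, ContinuousLinearMap.neg_apply,
      ContinuousLinearMap.zero_apply, smul_eq_mul, ContinuousLinearMap.coe_comp',
      Function.comp_apply, ContinuousLinearMap.proj_apply] at h0
    rw [Finset.sum_add_distrib] at h0
    have h1 : ∑ p' : S × A, psiMat P γ (π θ) p p'
        * fderiv ℝ (fun t => qf t p') θ (Pi.single i 1)
        = ∑ p' : S × A, qf θ p' * ((γ * P p p'.1) * fderiv ℝ π θ (Pi.single i 1) p') := by
      have h2 : ∀ x y : ℝ, x + y = 0 → x = -y := fun x y h => by linarith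
      rw [h2 _ _ h0, ← Finset.sum_neg_distrib]
      exact Finset.sum_congr rfl fun p' _ => by ring
    rw [h1, Finset.mul_sum]
    exact Finset.sum_congr rfl fun p' _ => by ring
  -- derivative of J
  have hJder : HasFDerivAt (fun t => dOcc P γ μ0 (π t) ⬝ᵥ r)
      ((1 - γ) • ∑ s : S, μ0 s • ∑ a : A,
        (π θ (s, a) • (fderiv ℝ (fun t => qf t (s, a)) θ)
          + qf θ (s, a) • ((ContinuousLinearMap.proj (s, a)).comp (fderiv ℝ π θ)))) θ := by
    rw [hJexpr]
    exact ((HasFDerivAt.fun_sum fun s _ => ((HasFDerivAt.fun_sum fun a _ =>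
      (hu (s, a)).mul ((hqd (s, a) θ).hasFDerivAt)).const_mul (μ0 s)))).const_mul (1 - γ)
  have hDval : fderiv ℝ (fun t => dOcc P γ μ0 (π t) ⬝ᵥ r) θ (Pi.single i 1)
      = (1 - γ) * ∑ s : S, μ0 s * ∑ a : A,
          (π θ (s, a) * fderiv ℝ (fun t => qf t (s, a)) θ (Pi.single i 1)
            + qf θ (s, a) * fderiv ℝ π θ (Pi.single i 1) (s, a)) := by
    rw [hJder.fderiv]
    simp [ContinuousLinearMap.sum_apply, ContinuousLinearMap.add_apply,
      ContinuousLinearMap.coe_smul', Pi.smul_apply, smul_eq_mul,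
      ContinuousLinearMap.coe_comp', Function.comp_apply, ContinuousLinearMap.proj_apply]
  -- occupancy fixed point
  have hdvΨ : dOcc P γ μ0 (π θ) ᵥ* psiMat P γ (π θ) = (1 - γ) • (μ0 ᵥ* piMat (π θ)) := by
    show ((1 - γ) • (((psiMat P γ (π θ))ᵀ)⁻¹ *ᵥ ((piMat (π θ))ᵀ *ᵥ μ0)))
        ᵥ* psiMat P γ (π θ) = _
    rw [← Matrix.transpose_nonsing_inv, Matrix.mulVec_transpose, Matrix.mulVec_transpose,
      Matrix.smul_vecMul, Matrix.vecMul_vecMul, Matrix.nonsing_inv_mul _ (hdet θ),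
      Matrix.vecMul_one]
  have hdρ : ∀ p : S × A, dOcc P γ μ0 (π θ) p
      = ((1 - γ) * μ0 p.1 + γ * ((dOcc P γ μ0 (π θ) ᵥ* P) p.1)) * π θ p := by
    intro p
    have h0 := congrFun hdvΨ p
    have hL : (dOcc P γ μ0 (π θ) ᵥ* psiMat P γ (π θ)) p
        = dOcc P γ μ0 (π θ) p - γ * ((dOcc P γ μ0 (π θ) ᵥ* P) p.1) * π θ p := by
      show (∑ p'' : S × A, dOcc P γ μ0 (π θ) p'' * psiMat P γ (π θ) p'' p)
          = dOcc P γ μ0 (π θ) p - γ * ((dOcc P γ μ0 (π θ) ᵥ* P) p.1) * π θ p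
      have hsum : γ * ((dOcc P γ μ0 (π θ) ᵥ* P) p.1) * π θ p
          = ∑ p'' : S × A, dOcc P γ μ0 (π θ) p'' * (γ * (P p'' p.1 * π θ p)) := by
        show γ * (∑ p'' : S × A, dOcc P γ μ0 (π θ) p'' * P p'' p.1) * π θ p = _
        rw [Finset.mul_sum, Finset.sum_mul]
        exact Finset.sum_congr rfl fun p'' _ => by ring
      rw [hsum]
      simp only [psiMat_apply, mul_sub, mul_ite, mul_one, mul_zero, Finset.sum_sub_distrib]
      congr 1
      rw [Finset.sum_ite_eq' Finset.univ p (fun p'' => dOcc P γ μ0 (π θ) p'')]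
      simp
    have hR : ((1 - γ) • (μ0 ᵥ* piMat (π θ))) p = (1 - γ) * (μ0 p.1 * π θ p) := by
      rw [Pi.smul_apply, vecMul_piMat]
      simp [smul_eq_mul]
    rw [hL, hR] at h0
    ring_nf at h0 ⊢
    linarith
  have hξρ : ∀ s : S, (xiMat *ᵥ dOcc P γ μ0 (π θ)) s
      = (1 - γ) * μ0 s + γ * ((dOcc P γ μ0 (π θ) ᵥ* P) s) := by
    intro s
    rw [xiMat_mulVec]
    calc ∑ a : A, dOcc P γ μ0 (π θ) (s, a)
        = ∑ a : A, ((1 - γ) * μ0 s + γ * ((dOcc P γ μ0 (π θ) ᵥ* P) s)) * π θ (s, a) :=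
          Finset.sum_congr rfl fun a _ => hdρ (s, a)
      _ = ((1 - γ) * μ0 s + γ * ((dOcc P γ μ0 (π θ) ᵥ* P) s)) * ∑ a : A, π θ (s, a) :=
          (Finset.mul_sum _ _ _).symm
      _ = (1 - γ) * μ0 s + γ * ((dOcc P γ μ0 (π θ) ᵥ* P) s) := by
          rw [(hpol θ).2 s, mul_one]
  -- two halves of the derivative sum
  have hT2 : (1 - γ) * ∑ s : S, μ0 s
        * ∑ a : A, qf θ (s, a) * fderiv ℝ π θ (Pi.single i 1) (s, a)
      = ∑ p : S × A, (1 - γ) * μ0 p.1 * qf θ p * fderiv ℝ π θ (Pi.single i 1) p := by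
    rw [Fintype.sum_prod_type, Finset.mul_sum]
    refine Finset.sum_congr rfl fun s _ => ?_
    rw [Finset.mul_sum, Finset.mul_sum]
    exact Finset.sum_congr rfl fun a _ => by ring
  have hT1 : (1 - γ) * ∑ s : S, μ0 s
        * ∑ a : A, π θ (s, a) * fderiv ℝ (fun t => qf t (s, a)) θ (Pi.single i 1)
      = ∑ p : S × A, γ * ((dOcc P γ μ0 (π θ) ᵥ* P) p.1) * qf θ p
          * fderiv ℝ π θ (Pi.single i 1) p := by
    have e1 : (1 - γ) * ∑ s : S, μ0 s
          * ∑ a : A, π θ (s, a) * fderiv ℝ (fun t => qf t (s, a)) θ (Pi.single i 1)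
        = ∑ p : S × A, (dOcc P γ μ0 (π θ) ᵥ* psiMat P γ (π θ)) p
            * fderiv ℝ (fun t => qf t p) θ (Pi.single i 1) := by
      rw [hdvΨ, Fintype.sum_prod_type, Finset.mul_sum]
      refine Finset.sum_congr rfl fun s _ => ?_
      rw [Finset.mul_sum, Finset.mul_sum]
      refine Finset.sum_congr rfl fun a _ => ?_
      rw [Pi.smul_apply, vecMul_piMat]
      simp only [smul_eq_mul]
      ring
    have e2 : ∑ p : S × A, (dOcc P γ μ0 (π θ) ᵥ* psiMat P γ (π θ)) p
          * fderiv ℝ (fun t => qf t p) θ (Pi.single i 1)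
        = ∑ p : S × A, dOcc P γ μ0 (π θ) p
            * (γ * ∑ p' : S × A, P p p'.1 * fderiv ℝ π θ (Pi.single i 1) p' * qf θ p') := by
      have e2a : ∑ p : S × A, (dOcc P γ μ0 (π θ) ᵥ* psiMat P γ (π θ)) p
            * fderiv ℝ (fun t => qf t p) θ (Pi.single i 1)
          = dOcc P γ μ0 (π θ) ⬝ᵥ (psiMat P γ (π θ)
              *ᵥ fun p => fderiv ℝ (fun t => qf t p) θ (Pi.single i 1)) :=
        (Matrix.dotProduct_mulVec _ _ _).symm
      rw [e2a]
      refine Finset.sum_congr rfl fun p _ => ?_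
      congr 1
      exact hkey p
    have e3 : ∑ p : S × A, dOcc P γ μ0 (π θ) p
          * (γ * ∑ p' : S × A, P p p'.1 * fderiv ℝ π θ (Pi.single i 1) p' * qf θ p')
        = ∑ p' : S × A, γ * ((dOcc P γ μ0 (π θ) ᵥ* P) p'.1) * qf θ p'
            * fderiv ℝ π θ (Pi.single i 1) p' := by
      calc ∑ p : S × A, dOcc P γ μ0 (π θ) p
            * (γ * ∑ p' : S × A, P p p'.1 * fderiv ℝ π θ (Pi.single i 1) p' * qf θ p')
          = ∑ p : S × A, ∑ p' : S × A, dOcc P γ μ0 (π θ) p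
              * (γ * (P p p'.1 * fderiv ℝ π θ (Pi.single i 1) p' * qf θ p')) := by
            refine Finset.sum_congr rfl fun p _ => ?_
            rw [Finset.mul_sum, Finset.mul_sum]
        _ = ∑ p' : S × A, ∑ p : S × A, dOcc P γ μ0 (π θ) p
              * (γ * (P p p'.1 * fderiv ℝ π θ (Pi.single i 1) p' * qf θ p')) :=
            Finset.sum_comm
        _ = ∑ p' : S × A, γ * ((dOcc P γ μ0 (π θ) ᵥ* P) p'.1) * qf θ p'
              * fderiv ℝ π θ (Pi.single i 1) p' := by
            refine Finset.sum_congr rfl fun p' _ => ?_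
            show _ = γ * (∑ p : S × A, dOcc P γ μ0 (π θ) p * P p p'.1) * qf θ p'
              * fderiv ℝ π θ (Pi.single i 1) p'
            rw [Finset.mul_sum, Finset.sum_mul, Finset.sum_mul]
            exact Finset.sum_congr rfl fun p _ => by ring
    rw [e1, e2, e3]
  -- the central formula
  have hMAIN : fderiv ℝ (fun t => dOcc P γ μ0 (π t) ⬝ᵥ r) θ (Pi.single i 1)
      = ∑ p : S × A, (xiMat *ᵥ dOcc P γ μ0 (π θ)) p.1 * qf θ p
          * fderiv ℝ π θ (Pi.single i 1) p := by
    rw [hDval]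
    have hsplit : (1 - γ) * ∑ s : S, μ0 s * ∑ a : A,
          (π θ (s, a) * fderiv ℝ (fun t => qf t (s, a)) θ (Pi.single i 1)
            + qf θ (s, a) * fderiv ℝ π θ (Pi.single i 1) (s, a))
        = (1 - γ) * (∑ s : S, μ0 s
            * ∑ a : A, π θ (s, a) * fderiv ℝ (fun t => qf t (s, a)) θ (Pi.single i 1))
          + (1 - γ) * (∑ s : S, μ0 s
            * ∑ a : A, qf θ (s, a) * fderiv ℝ π θ (Pi.single i 1) (s, a)) := by
      rw [← mul_add, ← Finset.sum_add_distrib]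
      congr 1
      exact Finset.sum_congr rfl fun s _ => by rw [Finset.sum_add_distrib, mul_add]
    rw [hsplit, hT1, hT2, ← Finset.sum_add_distrib]
    refine Finset.sum_congr rfl fun p _ => ?_
    rw [hξρ p.1]
    ring
  refine ⟨?_, ?_⟩
  · -- matrix form
    rw [hMAIN]
    have hRHS : ∀ (M : Matrix (Fin n) (S × A) ℝ) (w : S × A → ℝ),
        (M *ᵥ w) i = ∑ p : S × A, M i p * w p := fun M w => rfl
    rw [hRHS]
    simp only [Matrix.mul_diagonal, Matrix.of_apply, xiMatT_mulVec, hqf]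
    exact Finset.sum_congr rfl fun p _ => by
      refine Eq.trans ?_ (congrArg (fun z => z * ((psiMat P γ (π θ))⁻¹ *ᵥ r) p)
        (Matrix.mul_diagonal _ _ i p)).symm
      simp only [Matrix.of_apply, xiMatT_mulVec]; ring
  · -- componentwise form
    rw [hMAIN, Fintype.sum_prod_type]
    refine Finset.sum_congr rfl fun s _ => ?_
    rw [Finset.mul_sum]
    refine Finset.sum_congr rfl fun a _ => ?_
    simp only [hqf]
    ring
end
end
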